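/- Fix g > 0 and J with 2gJ/√π > 1. Then there exists a critical noise value σ_c = √((4g²J²/π − 1))/g > 0 such that the equation μ = erf(gJμ/√(1+g²σ²)) has three solutions for 0 ≤ σ < σ_c and a unique solution μ = 0 for σ ≥ σ_c. -/

import Mathlib

/-!
Write `a = gJ/√(1+g²σ²)`, so the equation is `μ = erf (a μ)`. Since `erf` is odd, everything
reduces to positive solutions. On `[0, ∞)` the function `erf` is strictly concave (its derivative
`2/√π · exp (-x²)` decreases), so `erf x / x` is strictly decreasing there and stays below its
limit `2/√π` at `0⁺`. Hence there is at most one positive solution, there is none when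
`2a/√π ≤ 1`, and when `2a/√π > 1` there is one by the intermediate value theorem, because
`erf (a μ)` starts above the diagonal and is bounded by `1`. Finally, `2a/√π > 1` is exactly
`σ < σ_c`.
-/

open Real

/-- The Gauss error function. -/
noncomputable def erf (x : ℝ) : ℝ := (2 / Real.sqrt π) * ∫ t in (0:ℝ)..x, Real.exp (-t^2)

open Set Filter MeasureTheory

lemma continuous_exp_neg_sq : Continuous fun t : ℝ => exp (-t ^ 2) := by fun_prop

lemma hasDerivAt_erf (x : ℝ) : HasDerivAt erf (2 / √π * exp (-x ^ 2)) x :=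
  ((continuous_exp_neg_sq.integral_hasStrictDerivAt 0 x).hasDerivAt).const_mul _

@[fun_prop]
lemma continuous_erf : Continuous erf :=
  continuous_iff_continuousAt.2 fun x => (hasDerivAt_erf x).continuousAt

lemma erf_zero : erf 0 = 0 := by simp [erf]

lemma erf_neg (x : ℝ) : erf (-x) = -erf x := by
  have h := intervalIntegral.integral_comp_neg (a := 0) (b := x) fun t : ℝ => exp (-t ^ 2)
  simp only [neg_sq, neg_zero] at h
  rw [erf, erf, intervalIntegral.integral_symm, ← h, mul_neg]

lemma erf_le_one {x : ℝ} (hx : 0 ≤ x) : erf x ≤ 1 := by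
  have hint : IntegrableOn (fun t : ℝ => exp (-t ^ 2)) (Ioi 0) := by
    simpa using (integrable_exp_neg_mul_sq one_pos).integrableOn
  have hhalf : ∫ t in Ioi (0 : ℝ), exp (-t ^ 2) = √π / 2 := by
    simpa using integral_gaussian_Ioi 1
  have hle : ∫ t in (0 : ℝ)..x, exp (-t ^ 2) ≤ √π / 2 := by
    rw [intervalIntegral.integral_of_le hx, ← hhalf]
    exact setIntegral_mono_set hint
      (Eventually.of_forall fun t => (exp_pos _).le) (ae_of_all _ Ioc_subset_Ioi_self)
  have hπ : 0 < √π := sqrt_pos.2 pi_pos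
  calc erf x ≤ 2 / √π * (√π / 2) := mul_le_mul_of_nonneg_left hle (by positivity)
    _ = 1 := by field_simp

lemma strictConcaveOn_erf : StrictConcaveOn ℝ (Ici 0) erf := by
  refine StrictAntiOn.strictConcaveOn_of_deriv (convex_Ici 0) continuous_erf.continuousOn ?_
  rw [interior_Ici]
  intro x hx y hy hxy
  rw [(hasDerivAt_erf x).deriv, (hasDerivAt_erf y).deriv]
  gcongr
  exact le_of_lt hx

lemma erf_lt_two_div_sqrt_pi_mul {x : ℝ} (hx : 0 < x) : erf x < 2 / √π * x := by
  have h := strictConcaveOn_erf.slope_lt_of_hasDerivAt self_mem_Ici hx.le hx (hasDerivAt_erf 0)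
  rw [slope_def_field, erf_zero, sub_zero, sub_zero, div_lt_iff₀ hx] at h
  simpa using h

lemma strictAntiOn_erf_div : StrictAntiOn (fun x => erf x / x) (Ioi 0) := by
  intro x hx y hy hxy
  have h := strictConcaveOn_erf.secant_strict_mono self_mem_Ici (mem_Ici.2 (le_of_lt hx))
    (mem_Ici.2 (le_of_lt hy)) (ne_of_gt hx) (ne_of_gt hy) hxy
  simpa only [erf_zero, sub_zero] using h

section FixedPoints

variable {a : ℝ}

lemma neg_eq_erf_mul_neg {μ : ℝ} (h : μ = erf (a * μ)) : -μ = erf (a * -μ) := by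
  rw [mul_neg, erf_neg, ← h]

lemma eq_zero_of_eq_erf_mul (ha : 0 < a) (hslope : 2 * a ≤ √π) {μ : ℝ}
    (h : μ = erf (a * μ)) : μ = 0 := by
  have hπ : 0 < √π := sqrt_pos.2 pi_pos
  have no_pos_root : ∀ ν : ℝ, 0 < ν → ν ≠ erf (a * ν) := by
    intro ν hν hfix
    have hlt := erf_lt_two_div_sqrt_pi_mul (mul_pos ha hν)
    have hle : 2 / √π * (a * ν) ≤ ν := by
      rw [div_mul_eq_mul_div, div_le_iff₀ hπ, ← mul_assoc, mul_comm ν]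
      exact mul_le_mul_of_nonneg_right hslope hν.le
    linarith
  rcases lt_trichotomy μ 0 with hneg | hzero | hpos
  · exact absurd (neg_eq_erf_mul_neg h) (no_pos_root _ (neg_pos.2 hneg))
  · exact hzero
  · exact absurd h (no_pos_root μ hpos)

lemma exists_pos_eq_erf_mul (hslope : √π < 2 * a) : ∃ m, 0 < m ∧ m = erf (a * m) := by
  have hπ : 0 < √π := sqrt_pos.2 pi_pos
  have ha : 0 < a := by linarith
  -- the slope of `μ ↦ erf (a * μ)` at `0` exceeds `1`, so it lies above the diagonal near `0⁺`
  have hderiv : HasDerivAt (fun μ => erf (a * μ)) (2 / √π * a) 0 := by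
    simpa [Function.comp_def] using (hasDerivAt_erf (a * 0)).comp 0 ((hasDerivAt_id 0).const_mul a)
  have hgt : 1 < 2 / √π * a := by rwa [div_mul_eq_mul_div, one_lt_div hπ]
  obtain ⟨ε, hε_lt, hε⟩ := ((hderiv.tendsto_slope_zero_right.eventually_const_lt hgt).and
    self_mem_nhdsWithin).exists
  simp only [zero_add, mul_zero, erf_zero, sub_zero, smul_eq_mul] at hε_lt
  replace hε : 0 < ε := hε
  have hε_below : ε < erf (a * ε) := by rwa [lt_inv_mul_iff₀ hε, mul_one] at hε_lt
  have hε_le : ε ≤ 1 := (hε_below.trans_le (erf_le_one (by positivity))).le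
  have hcont : ContinuousOn (fun μ => erf (a * μ) - μ) (Icc ε 1) := by fun_prop
  obtain ⟨m, hm, hfix⟩ := intermediate_value_Icc' hε_le hcont
    ⟨by simpa using erf_le_one ha.le, sub_nonneg.2 hε_below.le⟩
  exact ⟨m, hε.trans_le hm.1, (sub_eq_zero.1 hfix).symm⟩

lemma eq_of_pos_eq_erf_mul (ha : 0 < a) {m m' : ℝ} (hm : 0 < m) (hm' : 0 < m')
    (h : m = erf (a * m)) (h' : m' = erf (a * m')) : m = m' := by
  have ratio : ∀ ν, 0 < ν → ν = erf (a * ν) → erf (a * ν) / (a * ν) = a⁻¹ := by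
    intro ν hν hfix
    rw [← hfix]
    field_simp
  have := strictAntiOn_erf_div.injOn (mem_Ioi.2 (mul_pos ha hm)) (mem_Ioi.2 (mul_pos ha hm'))
    ((ratio m hm h).trans (ratio m' hm' h').symm)
  exact mul_left_cancel₀ ha.ne' this

lemma setOf_eq_erf_mul (hslope : √π < 2 * a) :
    ∃ m > 0, {μ : ℝ | μ = erf (a * μ)} = {-m, 0, m} := by
  have ha : 0 < a := by linarith [sqrt_pos.2 pi_pos]
  obtain ⟨m, hm, hfix⟩ := exists_pos_eq_erf_mul hslope
  refine ⟨m, hm, Set.ext fun μ => ?_⟩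
  simp only [mem_ofPred_eq, mem_insert_iff, mem_singleton_iff]
  constructor
  · intro h
    rcases lt_trichotomy μ 0 with hneg | hzero | hpos
    · exact Or.inl (neg_eq_iff_eq_neg.1
        (eq_of_pos_eq_erf_mul ha (neg_pos.2 hneg) hm (neg_eq_erf_mul_neg h) hfix))
    · exact Or.inr (Or.inl hzero)
    · exact Or.inr (Or.inr (eq_of_pos_eq_erf_mul ha hpos hm h hfix))
  · rintro (rfl | rfl | rfl)
    · exact neg_eq_erf_mul_neg hfix
    · rw [mul_zero, erf_zero]
    · exact hfix

end FixedPoints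

lemma sqrt_pi_lt_iff_lt_critical {g J σ : ℝ} (hg : 0 < g) (hJ : 0 < J) (hσ : 0 ≤ σ) :
    √π < 2 * (g * J / √(1 + g ^ 2 * σ ^ 2)) ↔ σ < √(4 * g ^ 2 * J ^ 2 / π - 1) / g := by
  have hs : 0 < √(1 + g ^ 2 * σ ^ 2) := sqrt_pos.2 (by positivity)
  calc √π < 2 * (g * J / √(1 + g ^ 2 * σ ^ 2))
      ↔ √(π * (1 + g ^ 2 * σ ^ 2)) < 2 * g * J := by
        rw [sqrt_mul pi_pos.le, mul_div_assoc', lt_div_iff₀ hs, mul_assoc 2]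
    _ ↔ π * (1 + g ^ 2 * σ ^ 2) < (2 * g * J) ^ 2 := sqrt_lt' (by positivity)
    _ ↔ (g * σ) ^ 2 < 4 * g ^ 2 * J ^ 2 / π - 1 := by
        rw [lt_sub_iff_add_lt, lt_div_iff₀ pi_pos]
        constructor <;> intro h <;> linarith
    _ ↔ g * σ < √(4 * g ^ 2 * J ^ 2 / π - 1) := (lt_sqrt (by positivity)).symm
    _ ↔ σ < √(4 * g ^ 2 * J ^ 2 / π - 1) / g := by rw [lt_div_iff₀ hg, mul_comm]

/-- Noise-induced pitchfork: for `2gJ/√π > 1` there is a critical noise `σ_c = √(4g²J²/π − 1)/g`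
such that `μ = erf(gJμ/√(1+g²σ²))` has three solutions for `0 ≤ σ < σ_c` and only the trivial
solution for `σ ≥ σ_c`. -/
theorem critical_noise_value (g J : ℝ) (hg : 0 < g) (hJ : 0 < J)
    (h : 1 < 2 * g * J / Real.sqrt π) :
    ∃ σc : ℝ, σc = Real.sqrt (4 * g ^ 2 * J ^ 2 / π - 1) / g ∧ 0 < σc ∧
      ∀ σ : ℝ, 0 ≤ σ →
        ((σ < σc → ∃ μs > (0:ℝ),
            {μ : ℝ | μ = erf (g * J * μ / Real.sqrt (1 + g ^ 2 * σ ^ 2))} = {-μs, 0, μs}) ∧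
         (σc ≤ σ →
            ∀ μ : ℝ, μ = erf (g * J * μ / Real.sqrt (1 + g ^ 2 * σ ^ 2)) → μ = 0)) := by
  refine ⟨_, rfl, ?_, fun σ hσ => ?_⟩
  · rw [one_lt_div (sqrt_pos.2 pi_pos), mul_assoc] at h
    simpa using (sqrt_pi_lt_iff_lt_critical hg hJ le_rfl).1 (by simpa using h)
  have hcrit := sqrt_pi_lt_iff_lt_critical hg hJ hσ
  have ha : 0 < g * J / √(1 + g ^ 2 * σ ^ 2) := by positivity
  simp only [mul_div_right_comm (g * J)]
  exact ⟨fun hlt => setOf_eq_erf_mul (hcrit.2 hlt),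
    fun hle _ => eq_zero_of_eq_erf_mul ha (not_lt.1 (mt hcrit.1 (not_lt.2 hle)))⟩
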